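/- Let A = A(Φ, Δ, Θ; a, m, Π, Γ) be a class of automata over the factored input alphabet X^a with finite internal alphabet Π and finite output alphabet Γ, Δ a finite class of semiautomata, viewed as a class of string functions on nonempty strings of length at most M ≥ 1. Suppose Φ and Θ have finite (graph) dimensions dim(Φ) and dim(Θ), and set w = log₂ C(a, m) + log₂ |Δ| + dim(Φ) + dim(Θ), where C(a, m) is the binomial coefficient. If w ≥ 2, then the (graph) dimension of A satisfies dim(A) ≤ 2 · w · log₂(w · e · M · |Π| · |Γ|). -/

import Mathlib

/-- A nonempty string over `σ`: first letter together with the remaining letters. -/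
def NEStr (σ : Type*) : Type _ := σ × List σ

/-- The underlying list of letters of a nonempty string. -/
def NEStr.toList {σ : Type*} (x : NEStr σ) : List σ := x.1 :: x.2

/-- The last letter of a nonempty string. -/
def NEStr.lastLetter {σ : Type*} (x : NEStr σ) : σ := x.2.getLastD x.1

/-- The growth of a class `F` of functions: `G(F, ℓ)` is the supremum, over all
sequences `x₁, …, x_ℓ` of domain elements, of the number of distinct patterns
`⟨f x₁, …, f x_ℓ⟩` for `f ∈ F`. -/
noncomputable def growth {α β : Type*} (F : Set (α → β)) (ℓ : ℕ) : ℕ∞ :=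
  ⨆ xs : Fin ℓ → α, ((fun f => fun i => f (xs i)) '' F).encard

/-- A class of string functions viewed as a class of functions on nonempty
strings of length at most `M` (by restricting the domain). -/
def restrictLen {σ γ : Type*} (M : ℕ) (F : Set (NEStr σ → γ)) :
    Set ({w : NEStr σ // (NEStr.toList w).length ≤ M} → γ) :=
  (fun f => fun w => f w.1) '' F

/-- A semiautomaton over the internal alphabet `Pi` with states `Q`. -/
structure Semiauto (Pi Q : Type*) where
  δ : Q → Pi → Q
  init : Q

/-- The function implemented by a semiautomaton. -/
def Semiauto.run {Pi Q : Type*} (D : Semiauto Pi Q) : List Pi → Q :=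
  fun w => w.foldl D.δ D.init

/-- An automaton over the factored input alphabet `X^a`. -/
structure FAut (X : Type*) (a m : ℕ) (Pi Q Γ : Type*) where
  J : Finset (Fin a)
  hJ : J.card = m
  φ : (Fin m → X) → Pi
  sa : Semiauto Pi Q
  θ : Q × (Fin m → X) → Γ

/-- The projection `π_J : X^a → X^m` onto the coordinates in `J` (in order). -/
def proj {X : Type*} {a m : ℕ} (J : Finset (Fin a)) (hJ : J.card = m)
    (σ : Fin a → X) : Fin m → X :=
  fun i => σ (J.orderIsoOfFin hJ i).val

/-- The string function implemented by an automaton over a factored alphabet: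
`A(σ₁ … σₘ) = θ(δ(q_init, φ(π_J σ₁) ⋯ φ(π_J σₘ₋₁)), π_J σₘ)`. -/
def FAut.run {X : Type*} {a m : ℕ} {Pi Q Γ : Type*} (A : FAut X a m Pi Q Γ) :
    NEStr (Fin a → X) → Γ :=
  fun w =>
    A.θ (A.sa.run ((NEStr.toList w).dropLast.map fun σ => A.φ (proj A.J A.hJ σ)),
         proj A.J A.hJ (NEStr.lastLetter w))

/-- The class `𝒜(Φ, Δ, Θ; a, m, Π, Γ)`. -/
def autClass {X : Type*} {a m : ℕ} {Pi Q Γ : Type*}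
    (Φ : Set ((Fin m → X) → Pi)) (Δ : Set (Semiauto Pi Q))
    (Θ : Set (Q × (Fin m → X) → Γ)) : Set (FAut X a m Pi Q Γ) :=
  {A | A.φ ∈ Φ ∧ A.sa ∈ Δ ∧ A.θ ∈ Θ}

/-- The binarisation of a class of functions: `f_bin(x, y) = [f x = y]`. -/
def binClass {α β : Type*} (F : Set (α → β)) : Set (α × β → Prop) :=
  (fun f => fun p => f p.1 = p.2) '' F

/-- The VC dimension of a class of `{0,1}`-valued functions: the largest `n`
with `G(H, n) = 2^n` (and `⊤` if no largest such `n` exists). -/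
noncomputable def vcDim {α : Type*} (H : Set (α → Prop)) : ℕ∞ :=
  ⨆ n ∈ {n : ℕ | growth H n = 2 ^ n}, (n : ℕ∞)

/-- The (graph) dimension of a class of functions is the VC dimension of its
binarisation. -/
noncomputable def gdim {α β : Type*} (F : Set (α → β)) : ℕ∞ :=
  vcDim (binClass F)

/-!
A shattered sample of `n` strings of length at most `M` carries `2^n` distinct output
patterns. The pattern of an automaton on the sample is determined by its dependency set and
core semiautomaton (`C(a,m)·|Δ|` choices), by the values of `φ` on the at most `nM` projected
prefix letters, and then by the values of `θ` on the `n` resulting (state, last letter)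
queries. By the Sauer–Shelah lemma for the binarisations, `φ` and `θ` contribute at most
`(nM|Π|+1)^dim Φ` and `(n|Γ|+1)^dim Θ` patterns, so `2^n ≤ C(a,m)·|Δ|·(cn)^(dim Φ + dim Θ)`
with `c = e M |Π| |Γ|`. Taking logarithms gives `n ≤ w log₂(cn)`, which forces
`n ≤ 2w log₂(cw)` since `log₂ t < t/2` for `t > 4`.
-/

open Set

section Patterns

variable {α β ι : Type*}

def patterns (F : Set (α → β)) (xs : ι → α) : Set (ι → β) :=
  (fun f i => f (xs i)) '' F

lemma growth_eq_iSup_encard_patterns (F : Set (α → β)) (n : ℕ) :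
    growth F n = ⨆ xs : Fin n → α, (patterns F xs).encard := rfl

lemma exists_encard_patterns_eq_of_growth_eq {F : Set (α → β)} {n k : ℕ}
    (h : growth F n = k) (hk : k ≠ 0) : ∃ xs : Fin n → α, (patterns F xs).encard = k := by
  have : Nonempty (Fin n → α) := by
    by_contra! hempty
    rw [growth, iSup_of_empty, bot_eq_zero'] at h
    exact hk (by exact_mod_cast h.symm)
  obtain ⟨xs, hxs⟩ := ENat.exists_eq_iSup_of_lt_top (f := fun xs => (patterns F xs).encard)
    (h ▸ ENat.natCast_lt_top k)
  exact ⟨xs, hxs.trans h⟩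

lemma patterns_restrictLen {σ : Type*} (M : ℕ) (F : Set (NEStr σ → β))
    (xs : ι → {w : NEStr σ // (NEStr.toList w).length ≤ M}) :
    patterns (restrictLen M F) xs = patterns F (Subtype.val ∘ xs) := by
  simp only [patterns, restrictLen, image_image]; rfl

lemma encard_patterns_binClass_le (F : Set (α → β)) (xs : ι → α × β) :
    (patterns (binClass F) xs).encard ≤ (patterns F (Prod.fst ∘ xs)).encard := by
  have : patterns (binClass F) xs =
      (fun v i => v i = (xs i).2) '' patterns F (Prod.fst ∘ xs) := by
    simp only [patterns, binClass, image_image]; rfl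
  exact this ▸ encard_image_le _ _

end Patterns

section SauerShelah

variable {γ : Type*}

lemma encard_univ_fun_prop (κ : Type*) [Fintype κ] :
    (univ : Set (κ → Prop)).encard = 2 ^ Fintype.card κ := by
  simp [Set.encard_univ]

lemma le_vcDim_of_patterns_eq_univ {κ : Type*} [Fintype κ] {H : Set (γ → Prop)} (ys : κ → γ)
    (h : patterns H ys = univ) : (Fintype.card κ : ℕ∞) ≤ vcDim H := by
  set e := Fintype.equivFin κ
  have hfull : patterns H (ys ∘ e.symm) = univ := by
    refine eq_univ_of_forall fun u => ?_
    obtain ⟨f, hf, hfu⟩ := h.symm ▸ mem_univ (u ∘ e)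
    exact ⟨f, hf, funext fun j => by simpa using congrFun hfu (e.symm j)⟩
  have hgrowth : growth H (Fintype.card κ) = 2 ^ Fintype.card κ := by
    rw [growth_eq_iSup_encard_patterns]
    refine le_antisymm (iSup_le fun xs => ?_) (le_iSup_of_le (ys ∘ e.symm) ?_)
    · simpa [encard_univ_fun_prop] using encard_le_encard (subset_univ (patterns H xs))
    · simp [hfull]
  exact le_iSup₂_of_le (f := fun n (_ : n ∈ {n : ℕ | growth H n = 2 ^ n}) => (n : ℕ∞)) _
    hgrowth le_rfl

lemma sum_choose_le_succ_pow (N d : ℕ) : ∑ k ∈ Finset.Iic d, N.choose k ≤ (N + 1) ^ d := by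
  rw [add_pow, Nat.range_succ_eq_Iic]
  refine Finset.sum_le_sum fun k hk => ?_
  rw [one_pow, mul_one]
  exact (Nat.choose_le_pow N k).trans
    (Nat.le_mul_of_pos_right _ (Nat.choose_pos (Finset.mem_Iic.1 hk)))

variable {ι : Type*} [Fintype ι]

open Classical in
/-- The patterns of `H` on `xs`, as subsets of `ι`, so that Mathlib's `Finset.vcDim` and its
Sauer–Shelah lemma apply. -/
noncomputable def traceFamily (H : Set (γ → Prop)) (xs : ι → γ) : Finset (Finset ι) :=
  (toFinite (patterns H xs)).toFinset.image fun u => Finset.univ.filter u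

lemma mem_traceFamily {H : Set (γ → Prop)} {xs : ι → γ} {s : Finset ι} :
    s ∈ traceFamily H xs ↔ ∃ f ∈ H, ∀ i, i ∈ s ↔ f (xs i) := by
  classical
  simp only [traceFamily, Finset.mem_image, Finite.mem_toFinset, patterns, mem_image]
  constructor
  · rintro ⟨_, ⟨f, hf, rfl⟩, rfl⟩
    exact ⟨f, hf, fun i => by simp⟩
  · rintro ⟨f, hf, hs⟩
    exact ⟨_, ⟨f, hf, rfl⟩, by ext i; simp [hs]⟩

lemma card_traceFamily (H : Set (γ → Prop)) (xs : ι → γ) :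
    (traceFamily H xs).card = (patterns H xs).ncard := by
  classical
  have hinj : Function.Injective fun u : ι → Prop => Finset.univ.filter u := fun u v huv =>
    funext fun i => propext <| by simpa using congrArg (i ∈ ·) huv
  rw [traceFamily, Finset.card_image_of_injective _ hinj, ← ncard_coe_finset,
    Finite.coe_toFinset]

lemma card_le_vcDim_of_shatters [DecidableEq ι] {H : Set (γ → Prop)} {xs : ι → γ}
    {s : Finset ι} (hs : (traceFamily H xs).Shatters s) : (s.card : ℕ∞) ≤ vcDim H := by
  classical
  rw [← Fintype.card_coe]
  refine le_vcDim_of_patterns_eq_univ (fun x : s => xs x) (eq_univ_of_forall fun u => ?_)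
  obtain ⟨b, hb, hsb⟩ := hs (Finset.filter_subset (fun x => ∀ hx : x ∈ s, u ⟨x, hx⟩) s)
  obtain ⟨f, hf, hfb⟩ := mem_traceFamily.1 hb
  refine ⟨f, hf, funext fun ⟨x, hx⟩ => propext ?_⟩
  have := congrArg (x ∈ ·) hsb
  simpa [hx, hfb] using this

lemma ncard_patterns_le_of_vcDim_le {H : Set (γ → Prop)} {d : ℕ} (hd : vcDim H ≤ d)
    (xs : ι → γ) : (patterns H xs).ncard ≤ (Fintype.card ι + 1) ^ d := by
  classical
  have hvc : (traceFamily H xs).vcDim ≤ d := Finset.sup_le fun s hs =>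
    ENat.natCast_le_natCast.1 <|
      (card_le_vcDim_of_shatters (Finset.mem_shatterer.1 hs)).trans hd
  calc (patterns H xs).ncard = (traceFamily H xs).card := (card_traceFamily H xs).symm
    _ ≤ (traceFamily H xs).shatterer.card := Finset.card_le_card_shatterer _
    _ ≤ ∑ k ∈ Finset.Iic (traceFamily H xs).vcDim, (Fintype.card ι).choose k :=
      Finset.card_shatterer_le_sum_vcDim
    _ ≤ ∑ k ∈ Finset.Iic d, (Fintype.card ι).choose k :=
      Finset.sum_le_sum_of_subset (Finset.Iic_subset_Iic.2 hvc)
    _ ≤ (Fintype.card ι + 1) ^ d := sum_choose_le_succ_pow _ d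

end SauerShelah

lemma ncard_patterns_le_of_gdim_le {α β ι : Type*} [Finite β] [Fintype ι] {F : Set (α → β)}
    {d : ℕ} (hd : gdim F ≤ d) (xs : ι → α) :
    (patterns F xs).ncard ≤ (Fintype.card ι * Nat.card β + 1) ^ d := by
  have := Fintype.ofFinite β
  let graph : (ι → β) → (ι × β → Prop) := fun v p => v p.1 = p.2
  have hinj : Function.Injective graph := fun u v huv =>
    funext fun i => (eq_iff_iff.1 (congrFun huv (i, u i))).1 rfl |>.symm
  have himage :
      graph '' patterns F xs = patterns (binClass F) fun p : ι × β => (xs p.1, p.2) := by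
    simp only [patterns, binClass, image_image]; rfl
  calc (patterns F xs).ncard = (graph '' patterns F xs).ncard :=
        (ncard_image_of_injective _ hinj).symm
    _ ≤ (Fintype.card (ι × β) + 1) ^ d := himage ▸ ncard_patterns_le_of_vcDim_le hd _
    _ = (Fintype.card ι * Nat.card β + 1) ^ d := by
      rw [Fintype.card_prod, Nat.card_eq_fintype_card]

lemma ncard_biUnion_le_mul {ι α : Type*} {t : Set ι} (ht : t.Finite) {s : ι → Set α} {k : ℕ}
    (hs : ∀ i ∈ t, (s i).ncard ≤ k) : (⋃ i ∈ t, s i).ncard ≤ t.ncard * k := by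
  calc (⋃ i ∈ t, s i).ncard ≤ ∑ i ∈ ht.toFinset, (s i).ncard := by
        simpa using ht.toFinset.set_ncard_biUnion_le s
    _ ≤ ht.toFinset.card * k :=
      Finset.sum_le_card_nsmul _ _ _ fun i hi => hs i (by simpa using hi)
    _ = t.ncard * k := by rw [ncard_eq_toFinset_card t ht]

section Automata

variable {X : Type*} {a m n : ℕ} {Pi Q Γ : Type*} (str : Fin n → NEStr (Fin a → X))

abbrev PrefixPos : Type := Σ i : Fin n, Fin (str i).toList.dropLast.length

def prefixLetter (p : PrefixPos str) : Fin a → X := (str p.1).toList.dropLast[(p.2 : ℕ)]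

def stateQuery (J : {J : Finset (Fin a) // J.card = m}) (D : Semiauto Pi Q)
    (v : PrefixPos str → Pi) (i : Fin n) : Q × (Fin m → X) :=
  (D.run (List.ofFn fun j => v ⟨i, j⟩), proj J.1 J.2 (str i).lastLetter)

lemma card_prefixPos_le {M : ℕ} (hstr : ∀ i, (str i).toList.length ≤ M) :
    Fintype.card (PrefixPos str) ≤ n * M := by
  simp only [PrefixPos, Fintype.card_sigma, Fintype.card_fin]
  calc ∑ i, (str i).toList.dropLast.length ≤ ∑ _i : Fin n, M :=
        Finset.sum_le_sum fun i _ => by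
          rw [List.length_dropLast]; exact (Nat.sub_le _ _).trans (hstr i)
    _ = n * M := by simp

lemma FAut.run_eq_θ_stateQuery (A : FAut X a m Pi Q Γ) (i : Fin n) :
    A.run (str i) = A.θ (stateQuery str ⟨A.J, A.hJ⟩ A.sa
      (fun p => A.φ (proj A.J A.hJ (prefixLetter str p))) i) := by
  simp only [FAut.run, stateQuery, prefixLetter]
  rw [← List.ofFn_getElem_eq_map]

lemma patterns_autClass_subset (Φ : Set ((Fin m → X) → Pi)) (Δ : Set (Semiauto Pi Q))
    (Θ : Set (Q × (Fin m → X) → Γ)) :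
    patterns (FAut.run '' autClass Φ Δ Θ) str ⊆
      ⋃ k ∈ (univ : Set {J : Finset (Fin a) // J.card = m}) ×ˢ Δ,
        ⋃ v ∈ patterns Φ (proj k.1.1 k.1.2 ∘ prefixLetter str),
          patterns Θ (stateQuery str k.1 k.2 v) := by
  rintro _ ⟨_, ⟨A, ⟨hφ, hsa, hθ⟩, rfl⟩, rfl⟩
  simp only [mem_iUnion]
  exact ⟨(⟨A.J, A.hJ⟩, A.sa), ⟨trivial, hsa⟩, _, ⟨A.φ, hφ, rfl⟩, A.θ, hθ,
    funext fun i => (FAut.run_eq_θ_stateQuery str A i).symm⟩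

lemma ncard_patterns_autClass_le [Finite Pi] [Finite Γ] {Φ : Set ((Fin m → X) → Pi)}
    {Δ : Set (Semiauto Pi Q)} {Θ : Set (Q × (Fin m → X) → Γ)} (hΔ : Δ.Finite) {dΦ dΘ : ℕ}
    (hΦ : gdim Φ ≤ dΦ) (hΘ : gdim Θ ≤ dΘ) {M : ℕ} (hstr : ∀ i, (str i).toList.length ≤ M) :
    (patterns (FAut.run '' autClass Φ Δ Θ) str).ncard ≤
      a.choose m * Δ.ncard * (n * M * Nat.card Pi + 1) ^ dΦ * (n * Nat.card Γ + 1) ^ dΘ := by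
  have hφ : ∀ J : {J : Finset (Fin a) // J.card = m},
      (patterns Φ (proj J.1 J.2 ∘ prefixLetter str)).ncard ≤ (n * M * Nat.card Pi + 1) ^ dΦ :=
    fun J => (ncard_patterns_le_of_gdim_le hΦ _).trans <| by
      gcongr; exact card_prefixPos_le str hstr
  have hθ : ∀ J (D : Semiauto Pi Q) v,
      (patterns Θ (stateQuery str J D v)).ncard ≤ (n * Nat.card Γ + 1) ^ dΘ :=
    fun J D v => by simpa using ncard_patterns_le_of_gdim_le hΘ (stateQuery str J D v)
  have hkeys : ((univ : Set {J : Finset (Fin a) // J.card = m}) ×ˢ Δ).ncard =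
      a.choose m * Δ.ncard := by
    rw [ncard_prod, ncard_univ, Nat.card_eq_fintype_card, Fintype.card_finset_len,
      Fintype.card_fin]
  calc _ ≤ _ := ncard_le_ncard (patterns_autClass_subset str Φ Δ Θ) (toFinite _)
    _ ≤ a.choose m * Δ.ncard * ((n * M * Nat.card Pi + 1) ^ dΦ * (n * Nat.card Γ + 1) ^ dΘ) :=
      hkeys ▸ ncard_biUnion_le_mul (finite_univ.prod hΔ) fun k _ =>
        ncard_biUnion_le_mul (toFinite _) (fun v _ => hθ k.1 k.2 v) |>.trans
          (Nat.mul_le_mul_right _ (hφ k.1))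
    _ = _ := by ring

end Automata

section Logarithms

open Real

lemma logb_two_lt_half {t : ℝ} (ht : 4 < t) : logb 2 t < t / 2 := by
  rw [logb_lt_iff_lt_rpow one_lt_two (by linarith)]
  have hlog2 := log_two_gt_d9
  calc t < 4 * (1 + log 2 * ((t - 4) / 2)) := by nlinarith
    _ ≤ 4 * 2 ^ ((t - 4) / 2) := by
      rw [rpow_def_of_pos two_pos]
      gcongr
      linarith [add_one_le_exp (log 2 * ((t - 4) / 2))]
    _ = 2 ^ (t / 2) := by
      rw [show t / 2 = 2 + (t - 4) / 2 by ring, rpow_add two_pos]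
      norm_num

lemma le_mul_logb_of_two_pow_le {K y : ℝ} {n d : ℕ} (hK : 1 ≤ K) (hy : 2 ≤ y)
    (h : 2 ^ n ≤ K * y ^ d) : (n : ℝ) ≤ (logb 2 K + d) * logb 2 y := by
  have hlog := logb_le_logb_of_le one_lt_two (by positivity) h
  rw [logb_mul (by positivity) (by positivity), logb_pow, logb_pow,
    logb_self_eq_one one_lt_two, mul_one] at hlog
  have hy1 : 1 ≤ logb 2 y := by
    rwa [le_logb_iff_rpow_le one_lt_two (by positivity), rpow_one]
  have hK0 : 0 ≤ logb 2 K := logb_nonneg one_lt_two hK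
  nlinarith

lemma le_two_mul_logb_of_le_mul_logb {w c x : ℝ} (hw : 0 < w) (hcw : 4 ≤ c * w) (hx : 0 < x)
    (h : x ≤ w * logb 2 (c * x)) : x ≤ 2 * w * logb 2 (c * w) := by
  by_contra! hlt
  set L := logb 2 (c * w)
  set t := x / w
  have hc : 0 < c := (mul_pos_iff_of_pos_right hw).1 (by linarith)
  have ht : 0 < t := div_pos hx hw
  have hL : 2 ≤ L := by
    rw [le_logb_iff_rpow_le one_lt_two (by positivity)]
    norm_num [hcw]
  have h2L : 2 * L < t := by rw [lt_div_iff₀ hw]; linarith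
  have hsplit : logb 2 (c * x) = L + logb 2 t := by
    rw [← logb_mul (by positivity) ht.ne', mul_assoc, mul_div_cancel₀ x hw.ne']
  have htL : t ≤ L + logb 2 t := by
    rw [div_le_iff₀ hw, ← hsplit]; linarith
  linarith [logb_two_lt_half (by linarith : 4 < t)]

lemma le_two_mul_logb_of_two_pow_le {n C D M p g dΦ dΘ : ℕ} (hn : 0 < n) (hM : 1 ≤ M)
    (hp : 1 ≤ p) (hg : 1 ≤ g) (h : 2 ^ n ≤ C * D * (n * M * p + 1) ^ dΦ * (n * g + 1) ^ dΘ)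
    {w : ℝ} (hw : w = logb 2 C + logb 2 D + dΦ + dΘ) (hw2 : 2 ≤ w) :
    (n : ℝ) ≤ 2 * w * logb 2 (w * exp 1 * M * p * g) := by
  set c := exp 1 * M * p * g
  have hMpg : (1 : ℝ) ≤ M * p * g := by
    have : 1 ≤ M * p * g := Nat.one_le_iff_ne_zero.2 (by positivity)
    exact_mod_cast this
  have hn1 : (1 : ℝ) ≤ n := by exact_mod_cast hn
  have he := exp_one_gt_d9
  have hc : 2 ≤ c := by nlinarith
  -- both `n M p + 1` and `n g + 1` are at most `2 n M p g ≤ c n`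
  have hsucc_le : ∀ k : ℕ, k ≤ n * M * p * g → ((k + 1 : ℕ) : ℝ) ≤ c * n := fun k hk => by
    have : (k : ℝ) ≤ n * (M * p * g) := by rw [← mul_assoc, ← mul_assoc]; exact_mod_cast hk
    push_cast; nlinarith
  have hC : C ≠ 0 := by rintro rfl; simp at h
  have hD : D ≠ 0 := by rintro rfl; simp at h
  have hCD : (1 : ℝ) ≤ C * D := by
    exact_mod_cast Nat.one_le_iff_ne_zero.2 (mul_ne_zero hC hD)
  have hcount : (2 : ℝ) ^ n ≤ C * D * (c * n) ^ (dΦ + dΘ) := by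
    have hcast := (Nat.cast_le (α := ℝ)).2 h
    push_cast at hcast
    rw [pow_add, ← mul_assoc]
    refine hcast.trans ?_
    gcongr
    · exact_mod_cast hsucc_le _ (Nat.le_mul_of_pos_right _ hg)
    · have hle : n ≤ n * M * p := by
        rw [mul_assoc]; exact Nat.le_mul_of_pos_right n (by positivity)
      exact_mod_cast hsucc_le _ (Nat.mul_le_mul_right g hle)
  have hmain : (n : ℝ) ≤ w * logb 2 (c * n) := by
    have := le_mul_logb_of_two_pow_le hCD (by nlinarith) hcount
    rwa [logb_mul (Nat.cast_ne_zero.2 hC) (Nat.cast_ne_zero.2 hD), Nat.cast_add, ← add_assoc,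
      ← hw] at this
  calc (n : ℝ) ≤ 2 * w * logb 2 (c * w) :=
        le_two_mul_logb_of_le_mul_logb (by linarith) (by nlinarith) (by linarith) hmain
    _ = 2 * w * logb 2 (w * exp 1 * M * p * g) := by simp only [c]; ring_nf

end Logarithms

lemma vcDim_le_ofReal {γ : Type*} {H : Set (γ → Prop)} {R : ℝ}
    (h : ∀ n, 0 < n → growth H n = 2 ^ n → (n : ℝ) ≤ R) :
    (vcDim H : ENNReal) ≤ ENNReal.ofReal R := by
  have hfloor : vcDim H ≤ ⌊R⌋₊ := iSup₂_le fun n hn => by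
    rcases Nat.eq_zero_or_pos n with rfl | hpos
    · exact bot_le
    · exact_mod_cast Nat.le_floor (h n hpos hn)
  refine (ENat.toENNReal_le.2 hfloor).trans ?_
  rcases le_or_gt 0 R with hR | hR
  · simpa using ENNReal.ofReal_le_ofReal (Nat.floor_le hR)
  · simp [Nat.floor_of_nonpos hR.le]

lemma exists_two_pow_le_ncard_patterns {σ γ : Type*} [Finite γ] {M n : ℕ}
    {F : Set (NEStr σ → γ)} (h : growth (binClass (restrictLen M F)) n = 2 ^ n) :
    ∃ str : Fin n → NEStr σ,
      (∀ i, (str i).toList.length ≤ M) ∧ 2 ^ n ≤ (patterns F str).ncard := by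
  obtain ⟨xs, hxs⟩ := exists_encard_patterns_eq_of_growth_eq (k := 2 ^ n) (by exact_mod_cast h)
    (by positivity)
  refine ⟨fun i => (xs i).1.1, fun i => (xs i).1.2, ?_⟩
  have := hxs ▸ encard_patterns_binClass_le _ xs
  rw [patterns_restrictLen, ← (toFinite _).cast_ncard_eq] at this
  exact_mod_cast this

theorem gdim_autClass_le_general {X : Type*} {a m : ℕ} {Pi Q Γ : Type*}
    [Finite Pi] [Finite Γ]
    (Φ : Set ((Fin m → X) → Pi)) (Δ : Set (Semiauto Pi Q))
    (Θ : Set (Q × (Fin m → X) → Γ)) (hΔ : Δ.Finite)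
    (M : ℕ)
    (dΦ dΘ : ℕ) (hΦdim : gdim Φ = (dΦ : ℕ∞)) (hΘdim : gdim Θ = (dΘ : ℕ∞))
    (w : ℝ)
    (hw : w = Real.logb 2 (Nat.choose a m) + Real.logb 2 Δ.ncard + dΦ + dΘ)
    (hw2 : 2 ≤ w) :
    (gdim (restrictLen M ((fun A => FAut.run A) '' autClass (X := X) (a := a) Φ Δ Θ)) : ENNReal) ≤
      ENNReal.ofReal
        (2 * w * Real.logb 2 (w * Real.exp 1 * M * Nat.card Pi * Nat.card Γ)) := by
  refine vcDim_le_ofReal fun n hn hshatter => ?_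
  obtain ⟨str, hstr, hpat⟩ := exists_two_pow_le_ncard_patterns hshatter
  obtain ⟨_, _, ⟨A, -, rfl⟩, -⟩ : (patterns (FAut.run '' autClass Φ Δ Θ) str).Nonempty :=
    nonempty_of_ncard_ne_zero ((Nat.two_pow_pos n).trans_le hpat).ne'
  let i₀ : Fin n := ⟨0, hn⟩
  have : Nonempty Pi := ⟨A.φ (proj A.J A.hJ (str i₀).1)⟩
  have : Nonempty Γ := ⟨A.run (str i₀)⟩
  have hM : 1 ≤ M := (hstr i₀).trans' (by simp [NEStr.toList])
  exact le_two_mul_logb_of_two_pow_le hn hM Nat.card_pos Nat.card_pos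
    (hpat.trans (ncard_patterns_autClass_le str hΔ hΦdim.le hΘdim.le hstr)) hw hw2

/-- Sample-complexity dimension bound for a class of automata: with
`w = log₂ C(a,m) + log₂ |Δ| + dim Φ + dim Θ ≥ 2`, the (graph) dimension of the
class `𝒜(Φ, Δ, Θ; a, m, Π, Γ)`, viewed as a class of string functions on
nonempty strings of length at most `M ≥ 1`, is at most
`2 · w · log₂(w · e · M · |Π| · |Γ|)`. -/
theorem gdim_autClass_le {X : Type*} {a m : ℕ} {Pi Q Γ : Type*}
    [Finite Pi] [Finite Γ]
    (Φ : Set ((Fin m → X) → Pi)) (Δ : Set (Semiauto Pi Q))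
    (Θ : Set (Q × (Fin m → X) → Γ)) (hΔ : Δ.Finite)
    (M : ℕ) (hM : 1 ≤ M)
    (dΦ dΘ : ℕ) (hΦdim : gdim Φ = (dΦ : ℕ∞)) (hΘdim : gdim Θ = (dΘ : ℕ∞))
    (w : ℝ)
    (hw : w = Real.logb 2 (Nat.choose a m) + Real.logb 2 Δ.ncard + dΦ + dΘ)
    (hw2 : 2 ≤ w) :
    (gdim (restrictLen M ((fun A => FAut.run A) '' autClass (X := X) (a := a) Φ Δ Θ)) : ENNReal) ≤
      ENNReal.ofReal
        (2 * w * Real.logb 2 (w * Real.exp 1 * M * Nat.card Pi * Nat.card Γ)) :=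
  gdim_autClass_le_general Φ Δ Θ hΔ M dΦ dΘ hΦdim hΘdim w hw hw2
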